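/- arXiv:math/0605747 — 3 statements merged into one kernel-verified Lean document; each statement's English description precedes it below -/
import Mathlib

section
/- The Lebesgue measure of the set A_σ of all x ∈ (0,1) whose O¹-symbols satisfy g_{m+1}(x) > g_1(x) + g_2(x) + ⋯ + g_m(x) for every m ∈ ℕ, is equal to 0. Hence for Lebesgue-almost every x ∈ [0,1] there exists m with g_{m+1}(x) ≤ g_1(x) + ⋯ + g_m(x). -/
open MeasureTheory

noncomputable def osig (g : ℕ → ℕ) (k : ℕ) : ℝ := ∑ i ∈ Finset.range k, (g i : ℝ)

/-- The sum of the O¹-series with symbols `g_1 = g 0, g_2 = g 1, …`: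
`Ō¹(g_1,g_2,…) = ∑_{n≥1} (−1)^{n−1}/(g_1 (g_1+g_2) ⋯ (g_1+⋯+g_n))`. -/
noncomputable def bO1inf (g : ℕ → ℕ) : ℝ :=
  ∑' n : ℕ, (-1 : ℝ) ^ n / ∏ k ∈ Finset.range (n + 1), osig g (k + 1)

/-!
Let `A(s)` be the set of values of O¹-expansions whose symbols are superincreasing with
`g_1 > s`. The series is alternating with decreasing terms, so `A(s) ⊆ [0, 1/(s+1)]`. Removing
the first symbol gives `x = (1 - T x) / g_1`, where `T x` has the symbols `g_1 + g_2, g_3, …`;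
these are again superincreasing, with first symbol `> 2 g_1`. Hence `A(s)` is covered by the
images of `A(2t)`, `t > s`, under maps contracting by `1/t`, and
`λ(A(s)) ≤ ∑_{t>s} λ(A(2t)) / t`. Starting from `λ(A(s)) ≤ 1/s`, each use of this inequality
halves the bound, because `∑_{t>s} 1/t² ≤ 1/s`; so `λ(A(s)) = 0`.
-/

open scoped ENNReal

section

open Finset Set
open scoped Pointwise

lemma Real.volume_image_mul_add (a b : ℝ) (S : Set ℝ) :
    volume ((fun y => a * y + b) '' S) = ENNReal.ofReal |a| * volume S := by
  have h : (fun y => a * y + b) '' S = (fun y => y + b) '' (a • S) := by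
    rw [← Set.image_smul, image_image]
    rfl
  simp [h]

lemma Real.volume_image_one_sub_div {t : ℝ} (ht : 0 < t) (S : Set ℝ) :
    volume ((fun y => (1 - y) / t) '' S) = ENNReal.ofReal t⁻¹ * volume S := by
  have h : (fun y : ℝ => (1 - y) / t) = fun y => -t⁻¹ * y + t⁻¹ := by
    ext y
    ring
  rw [h, Real.volume_image_mul_add, abs_neg, abs_of_pos (inv_pos.2 ht)]

lemma sum_inv_sq_le_inv {s : ℕ} (hs : s ≠ 0) (F : Finset ℕ) (hF : ∀ t ∈ F, s < t) :
    ∑ t ∈ F, ((t : ℝ) ^ 2)⁻¹ ≤ (s : ℝ)⁻¹ := by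
  set N := max s (F.sup id)
  have hFN : F ⊆ Ioc s N := fun t ht =>
    mem_Ioc.2 ⟨hF t ht, (le_sup (f := id) ht).trans (le_max_right _ _)⟩
  calc ∑ t ∈ F, ((t : ℝ) ^ 2)⁻¹ ≤ ∑ t ∈ Ioc s N, ((t : ℝ) ^ 2)⁻¹ :=
        sum_le_sum_of_subset_of_nonneg hFN fun _ _ _ => by positivity
    _ ≤ (s : ℝ)⁻¹ - (N : ℝ)⁻¹ := sum_Ioc_inv_sq_le_sub hs (le_max_left _ _)
    _ ≤ (s : ℝ)⁻¹ := sub_le_self _ (by positivity)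

lemma tsum_inv_sq_le_inv (s : ℕ) :
    ∑' t : {t : ℕ // s < t}, ((t : ℝ≥0∞) ^ 2)⁻¹ ≤ (s : ℝ≥0∞)⁻¹ := by
  rcases eq_or_ne s 0 with rfl | hs
  · simp
  refine ENNReal.summable.tsum_le_of_sum_le fun F => ?_
  have hcast (t : ℕ) (ht : 0 < t) : ((t : ℝ≥0∞) ^ 2)⁻¹ = ENNReal.ofReal ((t : ℝ) ^ 2)⁻¹ := by
    rw [ENNReal.ofReal_inv_of_pos (by positivity), ENNReal.ofReal_pow (Nat.cast_nonneg t),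
      ENNReal.ofReal_natCast]
  calc ∑ t ∈ F, (((t : ℕ) : ℝ≥0∞) ^ 2)⁻¹
      = ∑ t ∈ F.map (Function.Embedding.subtype _), ENNReal.ofReal ((t : ℝ) ^ 2)⁻¹ := by
        rw [sum_map]
        exact sum_congr rfl fun t _ => hcast t ((Nat.zero_le s).trans_lt t.2)
    _ = ENNReal.ofReal (∑ t ∈ F.map (Function.Embedding.subtype _), ((t : ℝ) ^ 2)⁻¹) :=
        (ENNReal.ofReal_sum_of_nonneg fun _ _ => by positivity).symm
    _ ≤ ENNReal.ofReal (s : ℝ)⁻¹ := by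
        refine ENNReal.ofReal_le_ofReal (sum_inv_sq_le_inv hs _ fun t ht => ?_)
        obtain ⟨t, -, rfl⟩ := mem_map.1 ht
        exact t.2
    _ = (s : ℝ≥0∞)⁻¹ := by
        rw [ENNReal.ofReal_inv_of_pos (by positivity), ENNReal.ofReal_natCast]

lemma eq_zero_of_le_tsum_inv_mul (a : ℕ → ℝ≥0∞) (hbound : ∀ s, a s ≤ (s : ℝ≥0∞)⁻¹)
    (hrec : ∀ s, a s ≤ ∑' t : {t : ℕ // s < t}, (t : ℝ≥0∞)⁻¹ * a (2 * t)) : a = 0 := by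
  have hiter (n : ℕ) : ∀ s, a s ≤ 2⁻¹ ^ n * (s : ℝ≥0∞)⁻¹ := by
    induction n with
    | zero => simpa using hbound
    | succ n ih =>
      intro s
      calc a s ≤ ∑' t : {t : ℕ // s < t}, ((t : ℕ) : ℝ≥0∞)⁻¹ * a (2 * t) := hrec s
        _ ≤ ∑' t : {t : ℕ // s < t}, 2⁻¹ ^ (n + 1) * (((t : ℕ) : ℝ≥0∞) ^ 2)⁻¹ := by
          refine ENNReal.tsum_le_tsum fun t => (mul_le_mul_right (ih _) _).trans_eq ?_
          rw [Nat.cast_mul, Nat.cast_two, ENNReal.inv_pow, pow_succ,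
            ENNReal.mul_inv (.inl two_ne_zero) (.inl ENNReal.ofNat_ne_top)]
          ring
        _ = 2⁻¹ ^ (n + 1) * ∑' t : {t : ℕ // s < t}, (((t : ℕ) : ℝ≥0∞) ^ 2)⁻¹ :=
          ENNReal.tsum_mul_left
        _ ≤ 2⁻¹ ^ (n + 1) * (s : ℝ≥0∞)⁻¹ := by gcongr; exact tsum_inv_sq_le_inv s
  have hzero {s : ℕ} (hs : s ≠ 0) : a s = 0 := by
    have hlim : Filter.Tendsto (fun n : ℕ => 2⁻¹ ^ n * (s : ℝ≥0∞)⁻¹) Filter.atTop (nhds 0) := by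
      simpa using ENNReal.Tendsto.mul_const
        (ENNReal.tendsto_pow_atTop_nhds_zero_of_lt_one (ENNReal.inv_lt_one.2 ENNReal.one_lt_two))
        (.inr (ENNReal.inv_ne_top.2 (Nat.cast_ne_zero.2 hs)))
    exact le_antisymm (ge_of_tendsto' hlim fun n => hiter n s) zero_le
  funext s
  refine le_antisymm ((hrec s).trans_eq ?_) zero_le
  exact ENNReal.tsum_eq_zero.2 fun t => by rw [hzero (by omega), mul_zero]

end

namespace O1

open Finset Set

section Series

variable {g : ℕ → ℕ}

lemma natCast_le_osig (hg : ∀ n, 0 < g n) (k : ℕ) : (k : ℝ) ≤ osig g k :=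
  calc (k : ℝ) = ∑ _i ∈ range k, (1 : ℝ) := by simp
    _ ≤ osig g k := sum_le_sum fun i _ => Nat.one_le_cast.2 (hg i)

lemma osig_one (g : ℕ → ℕ) : osig g 1 = g 0 := by simp [osig]

noncomputable def denom (g : ℕ → ℕ) (n : ℕ) : ℝ := ∏ k ∈ range (n + 1), osig g (k + 1)

lemma bO1inf_eq_tsum (g : ℕ → ℕ) : bO1inf g = ∑' n, (-1) ^ n * (denom g n)⁻¹ := by
  simp only [bO1inf, denom, div_eq_mul_inv]

lemma denom_succ (g : ℕ → ℕ) (n : ℕ) : denom g (n + 1) = denom g n * osig g (n + 2) :=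
  prod_range_succ _ _

lemma two_pow_le_denom (hg : ∀ n, 0 < g n) (n : ℕ) : (2 : ℝ) ^ n ≤ denom g n := by
  induction n with
  | zero => simpa [denom] using natCast_le_osig hg 1
  | succ n ih =>
    have h2 : (2 : ℝ) ≤ osig g (n + 2) := by
      simpa using (Nat.cast_le.2 (Nat.le_add_left 2 n)).trans (natCast_le_osig hg (n + 2))
    rw [pow_succ, denom_succ]
    exact mul_le_mul ih h2 zero_le_two ((pow_pos two_pos n).le.trans ih)

lemma denom_pos (hg : ∀ n, 0 < g n) (n : ℕ) : 0 < denom g n :=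
  (pow_pos two_pos n).trans_le (two_pow_le_denom hg n)

lemma antitone_inv_denom (hg : ∀ n, 0 < g n) : Antitone fun n => (denom g n)⁻¹ := by
  refine antitone_nat_of_succ_le fun n => inv_anti₀ (denom_pos hg n) ?_
  rw [denom_succ]
  refine le_mul_of_one_le_right (denom_pos hg n).le ?_
  simpa using (Nat.cast_le.2 (Nat.le_add_left 1 (n + 1))).trans (natCast_le_osig hg (n + 2))

lemma summable_inv_denom (hg : ∀ n, 0 < g n) : Summable fun n => (denom g n)⁻¹ := by
  refine Summable.of_nonneg_of_le (fun n => (inv_pos.2 (denom_pos hg n)).le) (fun n => ?_)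
    summable_geometric_two
  rw [one_div_pow, one_div]
  exact inv_anti₀ (pow_pos two_pos n) (two_pow_le_denom hg n)

lemma bO1inf_mem_Icc (hg : ∀ n, 0 < g n) : bO1inf g ∈ Icc 0 (g 0 : ℝ)⁻¹ := by
  have hlim := (summable_inv_denom hg).tendsto_alternating_series_tsum
  rw [bO1inf_eq_tsum]
  constructor
  · simpa using (antitone_inv_denom hg).alternating_series_le_tendsto hlim 0
  · simpa [denom, osig_one] using (antitone_inv_denom hg).tendsto_le_alternating_series hlim 0

def shift (g : ℕ → ℕ) : ℕ → ℕ
  | 0 => g 0 + g 1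
  | n + 1 => g (n + 2)

lemma sum_range_shift (g : ℕ → ℕ) (k : ℕ) :
    ∑ i ∈ range (k + 1), shift g i = ∑ i ∈ range (k + 2), g i := by
  induction k with
  | zero => simp [shift, sum_range_succ]
  | succ k ih => rw [sum_range_succ, ih, sum_range_succ _ (k + 2), shift]

lemma osig_shift (g : ℕ → ℕ) (k : ℕ) : osig (shift g) (k + 1) = osig g (k + 2) := by
  simp only [osig]
  exact_mod_cast sum_range_shift g k

lemma denom_succ_eq_mul_denom_shift (g : ℕ → ℕ) (n : ℕ) :
    denom g (n + 1) = g 0 * denom (shift g) n := by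
  rw [denom, prod_range_succ', mul_comm, osig_one, denom]
  simp only [osig_shift]

lemma bO1inf_eq_one_sub_div (hg : ∀ n, 0 < g n) :
    bO1inf g = (1 - bO1inf (shift g)) / g 0 := by
  have hsum := (summable_inv_denom hg).alternating
  have hterm (n : ℕ) : (-1) ^ (n + 1) * (denom g (n + 1))⁻¹ =
      -(g 0 : ℝ)⁻¹ * ((-1) ^ n * (denom (shift g) n)⁻¹) := by
    rw [denom_succ_eq_mul_denom_shift, mul_inv, pow_succ]
    ring
  have hfirst : denom g 0 = g 0 := by simp [denom, osig_one]
  rw [bO1inf_eq_tsum, hsum.tsum_eq_zero_add, tsum_congr hterm, tsum_mul_left, ← bO1inf_eq_tsum,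
    hfirst]
  field_simp
  ring

end Series

def IsSuperincreasing (g : ℕ → ℕ) : Prop := ∀ m, 1 ≤ m → ∑ i ∈ range m, g i < g m

namespace IsSuperincreasing

variable {g : ℕ → ℕ}

lemma pos (h : IsSuperincreasing g) (h0 : 0 < g 0) : ∀ n, 0 < g n
  | 0 => h0
  | n + 1 => (Nat.zero_le _).trans_lt (h (n + 1) le_add_self)

lemma shift (h : IsSuperincreasing g) : IsSuperincreasing (O1.shift g) := by
  rintro (_ | k) hk
  · omega
  · rw [sum_range_shift]
    exact h (k + 2) le_add_self

end IsSuperincreasing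

def superincreasingValues (s : ℕ) : Set ℝ :=
  {x | ∃ g, IsSuperincreasing g ∧ s < g 0 ∧ x = bO1inf g}

lemma superincreasingValues_subset_iUnion (s : ℕ) :
    superincreasingValues s ⊆
      ⋃ t : {t : ℕ // s < t}, (fun y => (1 - y) / (t : ℝ)) '' superincreasingValues (2 * t) := by
  rintro x ⟨g, hg, hs, rfl⟩
  have h01 : g 0 < g 1 := by simpa using hg 1 le_rfl
  refine mem_iUnion.2 ⟨⟨g 0, hs⟩, bO1inf (shift g), ⟨shift g, hg.shift, ?_, rfl⟩, ?_⟩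
  · simp only [O1.shift]
    omega
  · exact (bO1inf_eq_one_sub_div (hg.pos (by omega))).symm

lemma superincreasingValues_subset_Icc (s : ℕ) :
    superincreasingValues s ⊆ Icc 0 ((s : ℝ) + 1)⁻¹ := by
  rintro x ⟨g, hg, hs, rfl⟩
  obtain ⟨hlo, hhi⟩ := bO1inf_mem_Icc (hg.pos (by omega))
  refine ⟨hlo, hhi.trans (inv_anti₀ (by positivity) ?_)⟩
  exact_mod_cast hs

lemma volume_superincreasingValues_le_inv (s : ℕ) :
    volume (superincreasingValues s) ≤ (s : ℝ≥0∞)⁻¹ := by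
  calc volume (superincreasingValues s) ≤ volume (Icc 0 ((s : ℝ) + 1)⁻¹) :=
        measure_mono (superincreasingValues_subset_Icc s)
    _ = ((s : ℝ≥0∞) + 1)⁻¹ := by
        rw [Real.volume_Icc, sub_zero, ENNReal.ofReal_inv_of_pos (by positivity)]
        norm_cast
    _ ≤ (s : ℝ≥0∞)⁻¹ := ENNReal.inv_le_inv.2 le_self_add

lemma volume_superincreasingValues_le_tsum (s : ℕ) :
    volume (superincreasingValues s) ≤
      ∑' t : {t : ℕ // s < t}, (t : ℝ≥0∞)⁻¹ * volume (superincreasingValues (2 * t)) := by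
  refine (measure_mono (superincreasingValues_subset_iUnion s)).trans
    ((measure_iUnion_le _).trans_eq (tsum_congr fun t => ?_))
  have ht : (0 : ℝ) < (t : ℕ) := by exact_mod_cast (Nat.zero_le s).trans_lt t.2
  rw [Real.volume_image_one_sub_div ht, ENNReal.ofReal_inv_of_pos ht, ENNReal.ofReal_natCast]

lemma volume_superincreasingValues (s : ℕ) : volume (superincreasingValues s) = 0 :=
  congrFun (eq_zero_of_le_tsum_inv_mul _ volume_superincreasingValues_le_inv
    volume_superincreasingValues_le_tsum) s

end O1

/-- the set `A_σ` of `x ∈ (0,1)` admitting an O¹-representation whose symbols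
satisfy `g_{m+1} > g_1 + ⋯ + g_m` for every `m ≥ 1` has Lebesgue measure `0`; hence for
Lebesgue-a.e. `x ∈ [0,1]`, every O¹-representation of `x` has `g_{m+1} ≤ g_1 + ⋯ + g_m`
for some `m`. -/
theorem o1_Asigma_null :
    volume {x : ℝ | x ∈ Set.Ioo (0 : ℝ) 1 ∧ ∃ g : ℕ → ℕ, (∀ n, 0 < g n) ∧
      x = bO1inf g ∧ ∀ m, 1 ≤ m → (∑ i ∈ Finset.range m, g i) < g m} = 0 ∧
    (∀ᵐ x ∂(volume : Measure ℝ), x ∈ Set.Icc (0 : ℝ) 1 →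
      ∀ g : ℕ → ℕ, (∀ n, 0 < g n) → x = bO1inf g →
        ∃ m, 1 ≤ m ∧ g m ≤ ∑ i ∈ Finset.range m, g i) := by
  constructor
  · refine measure_mono_null ?_ (O1.volume_superincreasingValues 0)
    rintro x ⟨-, g, hg, rfl, hsup⟩
    exact ⟨g, hsup, hg 0, rfl⟩
  · rw [ae_iff]
    refine measure_mono_null ?_ (O1.volume_superincreasingValues 0)
    intro x hx
    push Not at hx
    obtain ⟨-, g, hg, rfl, hsup⟩ := hx
    exact ⟨g, hsup, hg 0, rfl⟩
end

section
/- The set E of all x ∈ [0,1] with bounded O¹-symbols (i.e., for which there exists K with g_k(x) ≤ K for all k) has Lebesgue measure 0. Consequently, for Lebesgue almost every x ∈ [0,1], limsup_{k→∞} g_k(x) = ∞. -/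
/-!
All symbols are at least `1`, so the `j`-th denominator is at least `(j + 1)!` and the value of
the series is determined, up to an error `4 / (n + 1)!`, by its first `n` symbols. If all symbols
lie in `{1, …, m}` there are at most `m ^ n` such prefixes, so `E_m` is covered by `m ^ n`
intervals of total length `8 m ^ n / (n + 1)!`, which tends to `0`. Hence each `E_m` is null and
so is their countable union `E`. Off `E` every representation has unbounded symbols, and an
unbounded sequence of naturals has `limsup = ∞`.
-/

open MeasureTheory

open Filter Topology Metric
open scoped Nat

lemma abs_tsum_sub_tsum_le_two_mul_tsum_nat_add {f f' b : ℕ → ℝ} {n : ℕ} (hb : Summable b)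
    (hf : ∀ j, |f j| ≤ b j) (hf' : ∀ j, |f' j| ≤ b j) (heq : ∀ j < n, f j = f' j) :
    |∑' j, f j - ∑' j, f' j| ≤ 2 * ∑' j, b (j + n) := by
  have hsf : Summable f := hb.of_norm_bounded hf
  have hsf' : Summable f' := hb.of_norm_bounded hf'
  have hhead : ∑ j ∈ Finset.range n, (f j - f' j) = 0 :=
    Finset.sum_eq_zero fun j hj => sub_eq_zero.2 (heq j (Finset.mem_range.1 hj))
  rw [← hsf.tsum_sub hsf', ← (hsf.sub hsf').sum_add_tsum_nat_add n, hhead, zero_add,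
    ← Real.norm_eq_abs]
  refine tsum_of_norm_bounded (((summable_nat_add_iff n).2 hb).hasSum.mul_left 2) fun j => ?_
  calc ‖f (j + n) - f' (j + n)‖ ≤ |f (j + n)| + |f' (j + n)| := norm_sub_le _ _
    _ ≤ 2 * b (j + n) := by linarith [hf (j + n), hf' (j + n)]

lemma summable_inv_factorial_succ : Summable fun j : ℕ => ((j + 1)! : ℝ)⁻¹ := by
  simpa using (summable_nat_add_iff 1).2 (Real.summable_pow_div_factorial 1)

lemma tsum_inv_factorial_add_succ_le (n : ℕ) :
    ∑' j, ((j + n + 1)! : ℝ)⁻¹ ≤ 2 / (n + 1)! := by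
  have hle : ∀ j, ((j + n + 1)! : ℝ)⁻¹ ≤ ((n + 1)! : ℝ)⁻¹ * (1 / 2) ^ j := by
    intro j
    have h : (n + 1)! * 2 ^ j ≤ (j + n + 1)! := calc
      (n + 1)! * 2 ^ j ≤ (n + 1)! * (n + 1 + 1) ^ j :=
        Nat.mul_le_mul_left _ (Nat.pow_le_pow_left (by omega) j)
      _ ≤ (n + 1 + j)! := Nat.factorial_mul_pow_le_factorial
      _ = (j + n + 1)! := by rw [Nat.add_right_comm, Nat.add_comm n]
    rw [one_div, inv_pow, ← mul_inv]
    exact inv_anti₀ (by positivity) (by exact_mod_cast h)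
  have hgeom := summable_geometric_two.mul_left ((n + 1)! : ℝ)⁻¹
  calc ∑' j, ((j + n + 1)! : ℝ)⁻¹ ≤ ∑' j, ((n + 1)! : ℝ)⁻¹ * (1 / 2) ^ j :=
        (hgeom.of_nonneg_of_le (fun j => by positivity) hle).tsum_le_tsum hle hgeom
    _ = 2 / (n + 1)! := by rw [tsum_mul_left, tsum_geometric_two]; ring

lemma volume_eq_zero_of_forall_finset_cover {s : Set ℝ} {c : ℕ → ℕ} {r : ℕ → ℝ}
    (hcover : ∀ n, ∃ t : Finset ℝ, t.card ≤ c n ∧ s ⊆ ⋃ x ∈ t, closedBall x (r n))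
    (hlim : Tendsto (fun n => (c n : ℝ) * r n) atTop (𝓝 0)) : volume s = 0 := by
  have hle : ∀ n, volume s ≤ ENNReal.ofReal (2 * (c n * r n)) := by
    intro n
    obtain ⟨t, hcard, hst⟩ := hcover n
    calc volume s ≤ ∑ x ∈ t, volume (closedBall x (r n)) :=
          (measure_mono hst).trans (measure_biUnion_finset_le t _)
      _ = t.card * ENNReal.ofReal (2 * r n) := by simp [Real.volume_closedBall]
      _ ≤ c n * ENNReal.ofReal (2 * r n) := by gcongr
      _ = ENNReal.ofReal (2 * (c n * r n)) := by
          rw [← ENNReal.ofReal_natCast, ← ENNReal.ofReal_mul (by positivity)]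
          ring_nf
  have hlim' : Tendsto (fun n => ENNReal.ofReal (2 * (c n * r n))) atTop (𝓝 0) := by
    simpa using ENNReal.tendsto_ofReal (hlim.const_mul 2)
  exact nonpos_iff_eq_zero.1 (ge_of_tendsto' hlim' hle)

lemma limsup_natCast_eq_top_of_not_bddAbove {g : ℕ → ℕ} (hg : ¬BddAbove (Set.range g)) :
    limsup (fun k => (g k : ℕ∞)) atTop = ⊤ := by
  refine ENat.eq_top_iff_forall_ge.2 fun m => le_limsup_of_frequently_le' ?_
  by_contra h
  rw [not_frequently] at h
  refine hg (isBoundedUnder_of_eventually_le (a := m) ?_).bddAbove_range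
  filter_upwards [h] with k hk
  exact_mod_cast (not_le.1 hk).le

section O1Expansion

variable {g g' : ℕ → ℕ} {n : ℕ}

noncomputable def o1Term (g : ℕ → ℕ) (j : ℕ) : ℝ :=
  (-1 : ℝ) ^ j / ∏ k ∈ Finset.range (j + 1), osig g (k + 1)

lemma natCast_le_osig (hg : ∀ n, 0 < g n) (k : ℕ) : (k : ℝ) ≤ osig g k := by
  simpa [osig] using Finset.card_nsmul_le_sum (Finset.range k) (fun i => (g i : ℝ)) 1
    fun i _ => by exact_mod_cast hg i

lemma factorial_le_prod_osig (hg : ∀ n, 0 < g n) (j : ℕ) :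
    ((j + 1)! : ℝ) ≤ ∏ k ∈ Finset.range (j + 1), osig g (k + 1) := by
  rw [← Finset.prod_range_add_one_eq_factorial]
  push_cast
  exact Finset.prod_le_prod (fun k _ => by positivity)
    fun k _ => by exact_mod_cast natCast_le_osig hg (k + 1)

lemma abs_o1Term_le (hg : ∀ n, 0 < g n) (j : ℕ) : |o1Term g j| ≤ ((j + 1)! : ℝ)⁻¹ := by
  have hpos : (0 : ℝ) < (j + 1)! := by positivity
  have hprod := factorial_le_prod_osig hg j
  rw [o1Term, abs_div, abs_pow, abs_neg, abs_one, one_pow, abs_of_pos (hpos.trans_le hprod),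
    one_div]
  exact inv_anti₀ hpos hprod

lemma osig_congr (h : ∀ i < n, g i = g' i) {k : ℕ} (hk : k ≤ n) : osig g k = osig g' k :=
  Finset.sum_congr rfl fun i hi => by rw [h i (by simp at hi; omega)]

lemma o1Term_congr (h : ∀ i < n, g i = g' i) {j : ℕ} (hj : j < n) :
    o1Term g j = o1Term g' j := by
  rw [o1Term, o1Term, Finset.prod_congr rfl fun k hk => osig_congr h (by simp at hk; omega)]

lemma abs_bO1inf_sub_le (hg : ∀ n, 0 < g n) (hg' : ∀ n, 0 < g' n) (h : ∀ i < n, g i = g' i) :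
    |bO1inf g - bO1inf g'| ≤ 4 / (n + 1)! := calc
  |bO1inf g - bO1inf g'| ≤ 2 * ∑' j, ((j + n + 1)! : ℝ)⁻¹ :=
      abs_tsum_sub_tsum_le_two_mul_tsum_nat_add summable_inv_factorial_succ (abs_o1Term_le hg)
        (abs_o1Term_le hg') fun _ hj => o1Term_congr h hj
  _ ≤ 2 * (2 / (n + 1)!) := by gcongr; exact tsum_inv_factorial_add_succ_le n
  _ = 4 / (n + 1)! := by ring

def extendByOne {n : ℕ} (v : Fin n → ℕ) : ℕ → ℕ :=
  fun i => if h : i < n then v ⟨i, h⟩ else 1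

lemma extendByOne_pos {v : Fin n → ℕ} (hv : ∀ i, 0 < v i) (k : ℕ) :
    0 < extendByOne v k := by
  unfold extendByOne
  split
  · exact hv _
  · exact one_pos

lemma bO1inf_image_subset_biUnion_closedBall (m n : ℕ) :
    bO1inf '' {g | ∀ k, g k ∈ Set.Icc 1 m} ⊆
      ⋃ x ∈ (Fintype.piFinset fun _ : Fin n => Finset.Icc 1 m).image
        (fun v => bO1inf (extendByOne v)), closedBall x (4 / (n + 1)!) := by
  rintro _ ⟨g, hg, rfl⟩
  refine Set.mem_biUnion (x := bO1inf (extendByOne fun i : Fin n => g i)) ?_ ?_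
  · exact Finset.mem_coe.2 (Finset.mem_image_of_mem _ (by simpa using fun i : Fin n => hg i))
  · rw [mem_closedBall, Real.dist_eq]
    exact abs_bO1inf_sub_le (fun k => (hg k).1) (extendByOne_pos fun i => (hg i).1)
      fun i hi => by simp [extendByOne, hi]

lemma volume_bO1inf_image_bounded_symbols (m : ℕ) :
    volume (bO1inf '' {g | ∀ k, g k ∈ Set.Icc 1 m}) = 0 := by
  refine volume_eq_zero_of_forall_finset_cover (c := fun n => m ^ n) (fun n =>
    ⟨_, Finset.card_image_le.trans (by simp), bO1inf_image_subset_biUnion_closedBall m n⟩) ?_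
  refine squeeze_zero (fun n => by positivity) (fun n => ?_)
    (by simpa using (FloorSemiring.tendsto_pow_div_factorial_atTop (m : ℝ)).const_mul 4)
  push_cast
  rw [mul_div_left_comm]
  gcongr
  exact n.le_succ

end O1Expansion

/-- the set `E` of `x ∈ [0,1]` with bounded O¹-symbols has Lebesgue
measure `0`; consequently, for Lebesgue-a.e. `x ∈ [0,1]`, `limsup_k g_k(x) = ∞`. -/
theorem o1_bounded_symbols_null :
    volume {x : ℝ | x ∈ Set.Icc (0 : ℝ) 1 ∧ ∃ g : ℕ → ℕ, (∀ n, 0 < g n) ∧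
      x = bO1inf g ∧ ∃ K, ∀ k, g k ≤ K} = 0 ∧
    (∀ᵐ x ∂(volume : Measure ℝ), x ∈ Set.Icc (0 : ℝ) 1 →
      ∀ g : ℕ → ℕ, (∀ n, 0 < g n) → x = bO1inf g →
        Filter.limsup (fun k => (g k : ℕ∞)) Filter.atTop = ⊤) := by
  have hnull : volume {x : ℝ | x ∈ Set.Icc (0 : ℝ) 1 ∧
      ∃ g : ℕ → ℕ, (∀ n, 0 < g n) ∧ x = bO1inf g ∧ ∃ K, ∀ k, g k ≤ K} = 0 := by
    refine measure_mono_null ?_ (measure_iUnion_null volume_bO1inf_image_bounded_symbols)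
    rintro x ⟨-, g, hg, rfl, K, hK⟩
    exact Set.mem_iUnion.2 ⟨K, g, fun k => ⟨hg k, hK k⟩, rfl⟩
  refine ⟨hnull, ?_⟩
  filter_upwards [measure_eq_zero_iff_ae_notMem.1 hnull] with x hx hIcc g hg hxg
  exact limsup_natCast_eq_top_of_not_bddAbove fun ⟨K, hK⟩ =>
    hx ⟨hIcc, g, hg, hxg, K, fun k => hK ⟨k, rfl⟩⟩
end

section
/- Let (a_n) be an increasing sequence of positive integers with a_{n+1} − a_n ≤ d for all n, for some fixed integer d ≥ 2, and let V = ℕ \ {a_1, a_2, …}. Then the set C[V] of all x ∈ [0,1] with g_n(x) ∈ V for all n has Lebesgue measure 0. In particular, if V is the set of all odd (or all even) positive integers, λ(C[V]) = 0. -/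
/-
A point of `C[V]` lies in the O¹-cylinder of its first `k` symbols, which sits inside the
closed ball of radius `1 / (σ_1 ⋯ σ_k (σ_k + 1))` around the `k`-th partial sum. Among the
children of a cylinder, those whose new symbol is some `a_n` carry at least the fraction
`1 / (d a_1)` of the parent's length: comparing `1 / ((m + c)(m + c + 1))` with the telescoping
differences `1 / (m + a_n) - 1 / (m + a_{n+1})` uses exactly the gap bound. Taking closures only
adds the partial sums themselves, because the children shrink to them. Hence the closure of every
cylinder has measure at most `2 (1 - 1 / (d a_1))^j` times its length for every `j`, i.e. zero.
-/

open MeasureTheory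

namespace O1

open Filter Topology Set Metric Nat

/-- `sigmaProd g k` is the paper's `σ_1 ⋯ σ_k`. -/
noncomputable def sigmaProd (g : ℕ → ℕ) (k : ℕ) : ℝ := ∏ j ∈ Finset.range k, osig g (j + 1)

noncomputable def partialSum (g : ℕ → ℕ) (k : ℕ) : ℝ :=
  ∑ n ∈ Finset.range k, (-1 : ℝ) ^ n / sigmaProd g (n + 1)

noncomputable def cylLength (g : ℕ → ℕ) (k : ℕ) : ℝ := 1 / (sigmaProd g k * (osig g k + 1))

lemma osig_succ (g : ℕ → ℕ) (k : ℕ) : osig g (k + 1) = osig g k + g k :=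
  Finset.sum_range_succ _ _

lemma sigmaProd_succ (g : ℕ → ℕ) (k : ℕ) : sigmaProd g (k + 1) = sigmaProd g k * osig g (k + 1) :=
  Finset.prod_range_succ _ _

lemma osig_nonneg (g : ℕ → ℕ) (k : ℕ) : 0 ≤ osig g k :=
  Finset.sum_nonneg fun _ _ ↦ Nat.cast_nonneg _

lemma sigmaProd_nonneg (g : ℕ → ℕ) (k : ℕ) : 0 ≤ sigmaProd g k :=
  Finset.prod_nonneg fun _ _ ↦ osig_nonneg g _

section Prefix

variable {g g' : ℕ → ℕ} {k : ℕ}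

lemma osig_congr (h : ∀ i < k, g' i = g i) : osig g' k = osig g k :=
  Finset.sum_congr rfl fun i hi ↦ by rw [h i (Finset.mem_range.1 hi)]

lemma sigmaProd_congr (h : ∀ i < k, g' i = g i) : sigmaProd g' k = sigmaProd g k :=
  Finset.prod_congr rfl fun j hj ↦
    osig_congr fun i hi ↦ h i (by have := Finset.mem_range.1 hj; omega)

lemma partialSum_congr (h : ∀ i < k, g' i = g i) : partialSum g' k = partialSum g k :=
  Finset.sum_congr rfl fun n hn ↦ by
    rw [sigmaProd_congr fun i hi ↦ h i (by have := Finset.mem_range.1 hn; omega)]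

lemma cylLength_congr (h : ∀ i < k, g' i = g i) : cylLength g' k = cylLength g k := by
  rw [cylLength, cylLength, sigmaProd_congr h, osig_congr h]

end Prefix

section Positive

variable {g : ℕ → ℕ} (hg : ∀ i, 0 < g i)
include hg

lemma le_osig (k : ℕ) : (k : ℝ) ≤ osig g k := by
  simpa [osig] using Finset.sum_le_sum fun i (_ : i ∈ Finset.range k) ↦
    (Nat.one_le_cast.2 (hg i) : (1 : ℝ) ≤ g i)

lemma factorial_le_sigmaProd (k : ℕ) : (k ! : ℝ) ≤ sigmaProd g k := by
  rw [← Finset.prod_range_add_one_eq_factorial, Nat.cast_prod]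
  exact Finset.prod_le_prod (fun _ _ ↦ by positivity) fun j _ ↦ by
    simpa using le_osig hg (j + 1)

lemma one_le_sigmaProd (k : ℕ) : 1 ≤ sigmaProd g k :=
  (Nat.one_le_cast.2 (factorial_pos k)).trans (factorial_le_sigmaProd hg k)

lemma sigmaProd_mul_le_sigmaProd_succ (k : ℕ) :
    sigmaProd g k * (osig g k + 1) ≤ sigmaProd g (k + 1) := by
  rw [sigmaProd_succ, osig_succ]
  gcongr
  · exact sigmaProd_nonneg g k
  · exact Nat.one_le_cast.2 (hg k)

lemma le_sigmaProd_succ (k : ℕ) : (g k : ℝ) ≤ sigmaProd g (k + 1) := by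
  rw [sigmaProd_succ, osig_succ]
  have := one_le_sigmaProd hg k
  have := osig_nonneg g k
  nlinarith

lemma antitone_one_div_sigmaProd : Antitone fun n ↦ 1 / sigmaProd g (n + 1) :=
  antitone_nat_of_succ_le fun n ↦ one_div_le_one_div_of_le
    (zero_lt_one.trans_le (one_le_sigmaProd hg _)) <|
      (sigmaProd_mul_le_sigmaProd_succ hg (n + 1)).trans' <| by
        have := sigmaProd_nonneg g (n + 1)
        have := osig_nonneg g (n + 1)
        nlinarith

lemma summable_one_div_sigmaProd : Summable fun n ↦ 1 / sigmaProd g (n + 1) := by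
  refine (Real.summable_pow_div_factorial 1).of_nonneg_of_le
    (fun n ↦ one_div_nonneg.2 (sigmaProd_nonneg g _)) fun n ↦ ?_
  rw [one_pow]
  exact one_div_le_one_div_of_le (by positivity) <|
    (Nat.cast_le.2 (factorial_le n.le_succ)).trans (factorial_le_sigmaProd hg _)

lemma abs_bO1inf_sub_partialSum_le (k : ℕ) :
    |bO1inf g - partialSum g k| ≤ 1 / sigmaProd g (k + 1) := by
  have h := alternating_series_error_bound _ (antitone_one_div_sigmaProd hg)
    (summable_one_div_sigmaProd hg) k
  simp_rw [mul_one_div] at h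
  exact h

end Positive

theorem _root_.Metric.closure_iUnion_subset_insert_of_subset_closedBall {X ι : Type*}
    [MetricSpace X] {s : ι → Set X} {p : X} {r : ι → ℝ} (hs : ∀ i, s i ⊆ closedBall p (r i))
    (hr : Tendsto r cofinite (𝓝 0)) :
    closure (⋃ i, s i) ⊆ insert p (⋃ i, closure (s i)) := by
  intro x hx
  rcases eq_or_ne x p with rfl | hxp
  · exact mem_insert _ _
  set ε := dist x p / 2
  have hε : 0 < ε := half_pos (dist_pos.2 hxp)
  have hεx : ε < dist x p := half_lt_self (dist_pos.2 hxp)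
  have hfin : {i | ¬ r i < ε}.Finite := hr.eventually (gt_mem_nhds hε)
  have hcover : (⋃ i, s i) ⊆ (⋃ i ∈ {i | ¬ r i < ε}, s i) ∪ closedBall p ε := by
    refine iUnion_subset fun i ↦ ?_
    by_cases hi : r i < ε
    · exact (hs i).trans ((closedBall_subset_closedBall hi.le).trans subset_union_right)
    · exact (subset_biUnion_of_mem (u := s) hi).trans subset_union_left
  have hx' := closure_mono hcover hx
  rw [closure_union, hfin.closure_biUnion, closure_closedBall] at hx'
  rcases hx' with hx' | hx'
  · obtain ⟨i, -, hi⟩ := mem_iUnion₂.1 hx'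
    exact mem_insert_of_mem _ (mem_iUnion.2 ⟨i, hi⟩)
  · exact absurd (mem_closedBall.1 hx') hεx.not_ge

/-- The closed sets `C[V]` of the paper are `closure (cylinder V 0 g)`; `cylinder V k g` is the
part of `C[V]` (before closure) whose first `k` symbols are `g 0, …, g (k - 1)`. -/
def cylinder (V : Set ℕ) (k : ℕ) (g : ℕ → ℕ) : Set ℝ :=
  {x | ∃ g' : ℕ → ℕ, (∀ n, g' n ∈ V) ∧ (∀ i < k, g' i = g i) ∧ x = bO1inf g'}

section Cylinder

variable {V : Set ℕ}

lemma cylinder_subset_iUnion_update (k : ℕ) (g : ℕ → ℕ) :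
    cylinder V k g ⊆ ⋃ c : ℕ, cylinder V (k + 1) (Function.update g k c) := by
  rintro x ⟨g', hg'V, hg'g, rfl⟩
  refine mem_iUnion.2 ⟨g' k, g', hg'V, fun i hi ↦ ?_, rfl⟩
  rcases (Nat.lt_succ_iff_lt_or_eq.1 hi) with hi | rfl
  · rw [Function.update_of_ne hi.ne, hg'g i hi]
  · rw [Function.update_self]

lemma cylinder_update_eq_empty {c : ℕ} (hc : c ∉ V) (k : ℕ) (g : ℕ → ℕ) :
    cylinder V (k + 1) (Function.update g k c) = ∅ := by
  refine eq_empty_iff_forall_notMem.2 ?_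
  rintro _ ⟨g', hg'V, hg'g, -⟩
  have := hg'g k k.lt_succ_self
  rw [Function.update_self] at this
  exact hc (this ▸ hg'V k)

variable (hV : ∀ c ∈ V, 0 < c)
include hV

lemma cylinder_subset_closedBall (k : ℕ) (g : ℕ → ℕ) :
    cylinder V k g ⊆ closedBall (partialSum g k) (cylLength g k) := by
  rintro _ ⟨g', hg'V, hg'g, rfl⟩
  have hg' : ∀ i, 0 < g' i := fun i ↦ hV _ (hg'V i)
  rw [mem_closedBall, Real.dist_eq, ← partialSum_congr hg'g, ← cylLength_congr hg'g]
  exact (abs_bO1inf_sub_partialSum_le hg' k).trans <|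
    one_div_le_one_div_of_le
      (mul_pos (zero_lt_one.trans_le (one_le_sigmaProd hg' k)) (by linarith [osig_nonneg g' k]))
      (sigmaProd_mul_le_sigmaProd_succ hg' k)

lemma cylinder_update_subset_closedBall (k : ℕ) (g : ℕ → ℕ) (c : ℕ) :
    cylinder V (k + 1) (Function.update g k c) ⊆ closedBall (partialSum g k) (1 / c) := by
  rintro _ ⟨g', hg'V, hg'g, rfl⟩
  have hg' : ∀ i, 0 < g' i := fun i ↦ hV _ (hg'V i)
  have hprefix : ∀ i < k, g' i = g i := fun i hi ↦ by
    rw [hg'g i (by omega), Function.update_of_ne hi.ne]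
  have hc : g' k = c := by rw [hg'g k k.lt_succ_self, Function.update_self]
  rw [mem_closedBall, Real.dist_eq, ← partialSum_congr hprefix, ← hc]
  exact (abs_bO1inf_sub_partialSum_le hg' k).trans <|
    one_div_le_one_div_of_le (Nat.cast_pos.2 (hg' k)) (le_sigmaProd_succ hg' k)

lemma closure_cylinder_subset (k : ℕ) (g : ℕ → ℕ) :
    closure (cylinder V k g) ⊆
      insert (partialSum g k) (⋃ c : ℕ, closure (cylinder V (k + 1) (Function.update g k c))) :=
  (closure_mono (cylinder_subset_iUnion_update k g)).trans <|
    closure_iUnion_subset_insert_of_subset_closedBall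
      (cylinder_update_subset_closedBall hV k g)
      (Nat.cofinite_eq_atTop ▸ tendsto_one_div_atTop_nhds_zero_nat)

end Cylinder

/-- `childWeight (osig g k) c / sigmaProd g k` is the length of the cylinder obtained by appending
the symbol `c` to `g 0, …, g (k - 1)`. -/
noncomputable def childWeight (m : ℝ) (c : ℕ) : ℝ := 1 / ((m + c) * (m + c + 1))

lemma cylLength_eq (g : ℕ → ℕ) (k : ℕ) :
    cylLength g k = 1 / (osig g k + 1) / sigmaProd g k := by
  rw [cylLength, div_div, mul_comm]

lemma cylLength_update_succ (g : ℕ → ℕ) (k c : ℕ) :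
    cylLength (Function.update g k c) (k + 1) = childWeight (osig g k) c / sigmaProd g k := by
  have hprefix : ∀ i < k, Function.update g k c i = g i := fun i hi ↦
    Function.update_of_ne hi.ne _ _
  have hosig : osig (Function.update g k c) (k + 1) = osig g k + c := by
    rw [osig_succ, osig_congr hprefix, Function.update_self]
  rw [cylLength, childWeight, sigmaProd_succ, sigmaProd_congr hprefix, hosig, div_div]
  ring

section Measure

variable {V : Set ℕ} {β : ℝ} (hV : ∀ c ∈ V, 0 < c) (hβ : 0 ≤ β)
  (hweight : ∀ m : ℝ, 0 ≤ m →
    ∑' c, ENNReal.ofReal (V.indicator (childWeight m) c) ≤ ENNReal.ofReal (β / (m + 1)))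
include hV hβ hweight

lemma volume_closure_cylinder_le (j : ℕ) :
    ∀ k g, volume (closure (cylinder V k g)) ≤ ENNReal.ofReal (β ^ j * (2 * cylLength g k)) := by
  induction j with
  | zero =>
    intro k g
    rw [pow_zero, one_mul, ← Real.volume_closedBall]
    exact measure_mono (closure_minimal (cylinder_subset_closedBall hV k g) isClosed_closedBall)
  | succ j ih =>
    intro k g
    set m := osig g k
    set K := β ^ j * 2 / sigmaProd g k
    have hK : 0 ≤ K := by have := sigmaProd_nonneg g k; positivity
    have hchild : ∀ c, volume (closure (cylinder V (k + 1) (Function.update g k c))) ≤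
        ENNReal.ofReal K * ENNReal.ofReal (V.indicator (childWeight m) c) := by
      intro c
      by_cases hc : c ∈ V
      · rw [indicator_of_mem hc, ← ENNReal.ofReal_mul hK]
        refine (ih _ _).trans_eq (congrArg ENNReal.ofReal ?_)
        rw [cylLength_update_succ]
        ring
      · simp [cylinder_update_eq_empty hc]
    calc volume (closure (cylinder V k g))
        ≤ volume (⋃ c : ℕ, closure (cylinder V (k + 1) (Function.update g k c))) :=
          (measure_mono (closure_cylinder_subset hV k g)).trans_eq
            (measure_congr (insert_ae_eq_self _ _))
      _ ≤ ∑' c, ENNReal.ofReal K * ENNReal.ofReal (V.indicator (childWeight m) c) :=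
          (measure_iUnion_le _).trans (ENNReal.tsum_le_tsum hchild)
      _ ≤ ENNReal.ofReal K * ENNReal.ofReal (β / (m + 1)) := by
          rw [ENNReal.tsum_mul_left]
          exact mul_le_mul_right (hweight m (osig_nonneg g k)) _
      _ = ENNReal.ofReal (β ^ (j + 1) * (2 * cylLength g k)) := by
          rw [← ENNReal.ofReal_mul hK, cylLength_eq]
          congr 1
          ring

lemma volume_closure_cylinder_eq_zero (hβ₁ : β < 1) (k : ℕ) (g : ℕ → ℕ) :
    volume (closure (cylinder V k g)) = 0 := by
  have hlim : Tendsto (fun j ↦ ENNReal.ofReal (β ^ j * (2 * cylLength g k))) atTop (𝓝 0) := by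
    simpa using ENNReal.tendsto_ofReal
      ((tendsto_pow_atTop_nhds_zero_of_lt_one hβ hβ₁).mul_const (2 * cylLength g k))
  exact le_antisymm
    (ge_of_tendsto' hlim fun j ↦ volume_closure_cylinder_le hV hβ hweight j k g) bot_le

end Measure

theorem _root_.Antitone.hasSum_sub_add_one {u : ℕ → ℝ} (hu : Antitone u)
    (h : Tendsto u atTop (𝓝 0)) : HasSum (fun n ↦ u n - u (n + 1)) (u 0) := by
  rw [hasSum_iff_tendsto_nat_of_nonneg fun n ↦ sub_nonneg.2 (hu n.le_succ)]
  simp_rw [Finset.sum_range_sub']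
  simpa using tendsto_const_nhds.sub h

lemma hasSum_one_div_add_sub {f : ℕ → ℕ} (hf : StrictMono f) {m : ℝ} (hm : 0 < m + f 0) :
    HasSum (fun n ↦ 1 / (m + f n) - 1 / (m + f (n + 1))) (1 / (m + f 0)) := by
  have hpos : ∀ n, 0 < m + f n := fun n ↦ hm.trans_le (by gcongr; exact hf.monotone n.zero_le)
  refine Antitone.hasSum_sub_add_one (fun i j hij ↦ ?_) ?_
  · exact one_div_le_one_div_of_le (hpos i) (by gcongr; exact hf.monotone hij)
  · simp only [one_div]
    exact (tendsto_atTop_add_const_left _ m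
      (tendsto_natCast_atTop_atTop.comp hf.tendsto_atTop)).inv_tendsto_atTop

lemma childWeight_nonneg {m : ℝ} (hm : 0 ≤ m) (c : ℕ) : 0 ≤ childWeight m c := by
  unfold childWeight
  positivity

lemma childWeight_eq_one_div_sub {m : ℝ} {c : ℕ} (hc : 0 < m + c) :
    childWeight m c = 1 / (m + c) - 1 / (m + c + 1) := by
  rw [childWeight, div_sub_div _ _ hc.ne' (by linarith)]
  ring

lemma childWeight_le_one_div_sub {m : ℝ} {c c' : ℕ} (hc : 0 < m + c) (hcc' : c < c') :
    childWeight m c ≤ 1 / (m + c) - 1 / (m + c') := by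
  have hc' : (c : ℝ) + 1 ≤ c' := by exact_mod_cast hcc'
  rw [childWeight_eq_one_div_sub hc]
  exact sub_le_sub_left (one_div_le_one_div_of_le (by linarith) (by linarith)) _

lemma one_div_sub_le_mul_childWeight {m : ℝ} {c c' d : ℕ} (hc : 0 < m + c) (hcc' : c < c')
    (hd : c' ≤ c + d) : 1 / (m + c) - 1 / (m + c') ≤ d * childWeight m c := by
  have hc' : (c : ℝ) + 1 ≤ c' := by exact_mod_cast hcc'
  have hd' : (c' : ℝ) ≤ c + d := by exact_mod_cast hd
  rw [childWeight, mul_one_div, div_sub_div _ _ hc.ne' (by linarith),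
    div_le_div_iff₀ (by nlinarith) (by nlinarith)]
  nlinarith [mul_nonneg (mul_nonneg hc.le hc.le) (sub_nonneg.2 hd'),
    mul_nonneg (mul_nonneg hc.le (by linarith : (0 : ℝ) ≤ c' - c)) (by linarith : (0 : ℝ) ≤ d - 1)]

lemma hasSum_indicator_childWeight {m : ℝ} (hm : 0 ≤ m) :
    HasSum ((Ioi 0).indicator (childWeight m)) (1 / (m + 1)) := by
  refine (hasSum_nat_add_iff' 1).1 ?_
  have hterm : ∀ n : ℕ, (Ioi 0).indicator (childWeight m) (n + 1) =
      1 / (m + ((n + 1 : ℕ) : ℝ)) - 1 / (m + ((n + 1 + 1 : ℕ) : ℝ)) := fun n ↦ by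
    rw [indicator_of_mem (s := Ioi 0) n.succ_pos, childWeight_eq_one_div_sub (by positivity)]
    push_cast
    ring
  rw [Finset.sum_range_one, indicator_of_notMem (s := Ioi 0) (lt_irrefl 0), sub_zero,
    funext hterm]
  simpa using hasSum_one_div_add_sub (f := (· + 1)) add_left_strictMono (m := m) (by positivity)

section BoundedGaps

variable {a : ℕ → ℕ} {d : ℕ} (ha : ∀ n, 0 < a n) (hmono : StrictMono a)
  (hgap : ∀ n, a (n + 1) ≤ a n + d)

include hmono hgap in
lemma pos_of_strictMono_of_forall_le_add : 0 < d := by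
  have h₀ : a 0 < a (0 + 1) := hmono (Nat.lt_succ_self 0)
  have := hgap 0
  omega

include ha hmono hgap in
lemma summable_childWeight_comp_and_le_tsum {m : ℝ} (hm : 0 ≤ m) :
    Summable (fun n ↦ childWeight m (a n)) ∧
      1 / (d * (m + a 0)) ≤ ∑' n, childWeight m (a n) := by
  have hpos : ∀ n, 0 < m + a n := fun n ↦ by
    have : (0 : ℝ) < a n := Nat.cast_pos.2 (ha n)
    linarith
  have htel := hasSum_one_div_add_sub hmono (hpos 0)
  have hsum : Summable (fun n ↦ childWeight m (a n)) :=
    htel.summable.of_nonneg_of_le (fun n ↦ childWeight_nonneg hm _)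
      fun n ↦ childWeight_le_one_div_sub (hpos n) (hmono n.lt_succ_self)
  refine ⟨hsum, ?_⟩
  rw [mul_comm, ← div_div]
  refine hasSum_le (fun n ↦ ?_) (htel.div_const d) hsum.hasSum
  rw [div_le_iff₀' (Nat.cast_pos.2 (pos_of_strictMono_of_forall_le_add hmono hgap))]
  exact one_div_sub_le_mul_childWeight (hpos n) (hmono n.lt_succ_self) (hgap n)

include ha hmono hgap in
lemma tsum_ofReal_indicator_childWeight_le {m : ℝ} (hm : 0 ≤ m) :
    ∑' c, ENNReal.ofReal ((Ioi 0 \ range a).indicator (childWeight m) c) ≤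
      ENNReal.ofReal ((1 - 1 / (d * a 0)) / (m + 1)) := by
  obtain ⟨hsum, hle⟩ := summable_childWeight_comp_and_le_tsum ha hmono hgap hm
  have hforbidden : HasSum ((range a).indicator (childWeight m)) (∑' n, childWeight m (a n)) :=
    hasSum_subtype_iff_indicator.1 ((hmono.injective.hasSum_range_iff).2 hsum.hasSum)
  have hallowed : HasSum ((Ioi 0 \ range a).indicator (childWeight m))
      (1 / (m + 1) - ∑' n, childWeight m (a n)) := by
    rw [indicator_sdiff (t := Ioi 0) (range_subset_iff.2 ha)]
    exact (hasSum_indicator_childWeight hm).sub hforbidden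
  rw [← ENNReal.ofReal_tsum_of_nonneg (indicator_nonneg (fun c _ ↦ childWeight_nonneg hm c))
    hallowed.summable, hallowed.tsum_eq]
  refine ENNReal.ofReal_le_ofReal ?_
  have hd : (0 : ℝ) < d := Nat.cast_pos.2 (pos_of_strictMono_of_forall_le_add hmono hgap)
  have ha0 : (1 : ℝ) ≤ a 0 := Nat.one_le_cast.2 (ha 0)
  have : 1 / (d * a 0) / (m + 1) ≤ 1 / (d * (m + a 0)) := by
    rw [div_div]
    exact one_div_le_one_div_of_le (by positivity) (by nlinarith [mul_nonneg hd.le hm])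
  rw [sub_div]
  linarith

include ha hmono hgap in
lemma volume_closure_cylinder_compl_range_eq_zero (k : ℕ) (g : ℕ → ℕ) :
    volume (closure (cylinder (Ioi 0 \ range a) k g)) = 0 := by
  have hd : (1 : ℝ) ≤ d := Nat.one_le_cast.2 (pos_of_strictMono_of_forall_le_add hmono hgap)
  have ha0 : (1 : ℝ) ≤ a 0 := Nat.one_le_cast.2 (ha 0)
  have hδ : 0 < 1 / ((d : ℝ) * a 0) := by positivity
  have hδ₁ : 1 / ((d : ℝ) * a 0) ≤ 1 :=
    div_le_one_of_le₀ (one_le_mul_of_one_le_of_one_le hd ha0) (by positivity)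
  exact volume_closure_cylinder_eq_zero (fun c hc ↦ hc.1) (sub_nonneg.2 hδ₁)
    (fun m hm ↦ tsum_ofReal_indicator_childWeight_le ha hmono hgap hm) (sub_lt_self 1 hδ) k g

end BoundedGaps

end O1

theorem o1_CV_complement_of_bounded_gaps_null_general
    (a : ℕ → ℕ) (ha : ∀ n, 0 < a n) (hmono : StrictMono a)
    (d : ℕ) (hgap : ∀ n, a (n + 1) ≤ a n + d) :
    volume (closure {x : ℝ | x ∈ Set.Icc (0 : ℝ) 1 ∧ ∃ g : ℕ → ℕ, (∀ n, 0 < g n) ∧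
      x = bO1inf g ∧ ∀ n k, g n ≠ a k}) = 0 ∧
    volume (closure {x : ℝ | x ∈ Set.Icc (0 : ℝ) 1 ∧ ∃ g : ℕ → ℕ, (∀ n, 0 < g n) ∧
      x = bO1inf g ∧ ∀ n, Odd (g n)}) = 0 ∧
    volume (closure {x : ℝ | x ∈ Set.Icc (0 : ℝ) 1 ∧ ∃ g : ℕ → ℕ, (∀ n, 0 < g n) ∧
      x = bO1inf g ∧ ∀ n, Even (g n)}) = 0 := by
  have null : ∀ (b : ℕ → ℕ) (e : ℕ), (∀ n, 0 < b n) → StrictMono b →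
      (∀ n, b (n + 1) ≤ b n + e) → ∀ P : ℕ → Prop, (∀ c, P c → ∀ k, c ≠ b k) →
      volume (closure {x : ℝ | x ∈ Set.Icc (0 : ℝ) 1 ∧ ∃ g : ℕ → ℕ, (∀ n, 0 < g n) ∧
        x = bO1inf g ∧ ∀ n, P (g n)}) = 0 := by
    intro b e hb hbmono hbgap P hP
    refine measure_mono_null (closure_mono ?_)
      (O1.volume_closure_cylinder_compl_range_eq_zero hb hbmono hbgap 0 b)
    rintro x ⟨-, g, hg, rfl, hgP⟩
    exact ⟨g, fun n ↦ ⟨hg n, fun ⟨k, hk⟩ ↦ hP _ (hgP n) k hk.symm⟩,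
      fun i hi ↦ absurd hi i.not_lt_zero, rfl⟩
  refine ⟨null a d ha hmono hgap _ fun c hc ↦ hc, ?_, ?_⟩
  · refine null (fun k ↦ 2 * k + 2) 2 (fun n ↦ by omega)
      (strictMono_nat_of_lt_succ fun n ↦ by omega) (fun n ↦ by omega) _ ?_
    rintro c ⟨t, rfl⟩ k
    omega
  · refine null (fun k ↦ 2 * k + 1) 2 (fun n ↦ by omega)
      (strictMono_nat_of_lt_succ fun n ↦ by omega) (fun n ↦ by omega) _ ?_
    rintro c ⟨t, rfl⟩ k
    omega

/-- Theorem 7: if `(a_n)` is an increasing sequence of positive integers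
with gaps `a_{n+1} − a_n ≤ d` (for some fixed `d ≥ 2`), and `V = ℕ \ {a_1, a_2, …}`, then
the set `C[V]` of `x ∈ [0,1]` all of whose O¹-symbols avoid every `a_n` has Lebesgue
measure `0`. In particular this holds when `V` is the set of odd (resp. even) positive
integers. -/
theorem o1_CV_complement_of_bounded_gaps_null
    (a : ℕ → ℕ) (ha : ∀ n, 0 < a n) (hmono : StrictMono a)
    (d : ℕ) (hd : 2 ≤ d) (hgap : ∀ n, a (n + 1) ≤ a n + d) :
    volume (closure {x : ℝ | x ∈ Set.Icc (0 : ℝ) 1 ∧ ∃ g : ℕ → ℕ, (∀ n, 0 < g n) ∧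
      x = bO1inf g ∧ ∀ n k, g n ≠ a k}) = 0 ∧
    volume (closure {x : ℝ | x ∈ Set.Icc (0 : ℝ) 1 ∧ ∃ g : ℕ → ℕ, (∀ n, 0 < g n) ∧
      x = bO1inf g ∧ ∀ n, Odd (g n)}) = 0 ∧
    volume (closure {x : ℝ | x ∈ Set.Icc (0 : ℝ) 1 ∧ ∃ g : ℕ → ℕ, (∀ n, 0 < g n) ∧
      x = bO1inf g ∧ ∀ n, Even (g n)}) = 0 :=
  o1_CV_complement_of_bounded_gaps_null_general a ha hmono d hgap
end
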